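/- arXiv:1209.2617 — 3 statements merged into one kernel-verified Lean document; each statement's English description precedes it below -/
import Mathlib

section
/- There is no term rewriting system P' such that for all expressions e and constructor terms t, t is in the CRWL-denotation of e under the program P = {f(X) → c(X,X), coin → 0, coin → 1} if and only if e rewrites to t in P' by ordinary term rewriting. -/
namespace Stmt0

/-- Terms over the fixed signature: constructors `0`, `1` (nullary) and `c`
(binary), defined function symbols `f` (unary) and `coin` (nullary), plus the
semantic bottom constant `⊥`. -/
inductive T : Type where
  | bot : T
  | var : ℕ → T
  | zero : T
  | one : T
  | pair : T → T → T
  | f : T → T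
  | coin : T

namespace T

/-- Substitution application. -/
def subst (σ : ℕ → T) : T → T
  | bot => bot
  | var x => σ x
  | zero => zero
  | one => one
  | pair a b => pair (subst σ a) (subst σ b)
  | f a => f (subst σ a)
  | coin => coin

/-- Expressions (terms of the signature, without `⊥`). -/
inductive IsExp : T → Prop
  | var (x : ℕ) : IsExp (var x)
  | zero : IsExp zero
  | one : IsExp one
  | pair {a b : T} : IsExp a → IsExp b → IsExp (pair a b)
  | f {a : T} : IsExp a → IsExp (f a)
  | coin : IsExp coin

/-- Partial constructor terms (`CTerm_⊥`). -/
inductive IsPCT : T → Prop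
  | bot : IsPCT bot
  | var (x : ℕ) : IsPCT (var x)
  | zero : IsPCT zero
  | one : IsPCT one
  | pair {a b : T} : IsPCT a → IsPCT b → IsPCT (pair a b)

/-- Total constructor terms (`CTerm`). -/
inductive IsCT : T → Prop
  | var (x : ℕ) : IsCT (var x)
  | zero : IsCT zero
  | one : IsCT one
  | pair {a b : T} : IsCT a → IsCT b → IsCT (pair a b)

/-- The CRWL proof calculus for the fixed program
`P = { f(X) → c(X,X), coin → 0, coin → 1 }`: rules (B), (RR), (DC) and (OR),
the latter instantiated to the three program rules (with parameter passing by
a partial constructor term). -/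
inductive CR : T → T → Prop
  | B (e : T) : CR e bot
  | RR (x : ℕ) : CR (var x) (var x)
  | DCzero : CR zero zero
  | DCone : CR one one
  | DCpair {a b t s : T} : CR a t → CR b s → CR (pair a b) (pair t s)
  | ORf {a u t : T} : IsPCT u → CR a u → CR (pair u u) t → CR (f a) t
  | ORcoin0 {t : T} : CR zero t → CR coin t
  | ORcoin1 {t : T} : CR one t → CR coin t

/-- One-step ordinary term rewriting with an arbitrary term rewriting system
`P'` over this signature (substitutions range over expressions, i.e. are
⊥-free). -/
inductive Rw (P' : Set (T × T)) : T → T → Prop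
  | root (l r : T) (σ : ℕ → T) :
      (l, r) ∈ P' → (∀ x, IsExp (σ x)) → Rw P' (subst σ l) (subst σ r)
  | pairL {a a' b : T} : Rw P' a a' → Rw P' (pair a b) (pair a' b)
  | pairR {a b b' : T} : Rw P' b b' → Rw P' (pair a b) (pair a b')
  | fC {a a' : T} : Rw P' a a' → Rw P' (f a) (f a')

/-! Ordinary rewriting is stable under substitution, so `f(X) →* c(X,X)` yields
`f(coin) →* c(coin,coin) →* c(0,1)`. CRWL instead has call-time choice: rule (OR)
first evaluates the argument `coin` to a single value, which is then shared by both
copies, so `f(coin) ⇒ c(0,1)` is not derivable. -/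

lemma subst_subst (σ τ : ℕ → T) (t : T) :
    subst τ (subst σ t) = subst (fun x => subst τ (σ x)) t := by
  induction t <;> simp [subst, *]

lemma IsExp.subst {σ : ℕ → T} (hσ : ∀ x, IsExp (σ x)) {t : T} (ht : IsExp t) :
    IsExp (T.subst σ t) := by
  induction ht with
  | var x => exact hσ x
  | zero => exact .zero
  | one => exact .one
  | pair _ _ iha ihb => exact .pair iha ihb
  | f _ ih => exact .f ih
  | coin => exact .coin

section Rewriting

variable {P' : Set (T × T)}

lemma Rw.subst {a b : T} (h : Rw P' a b) {τ : ℕ → T} (hτ : ∀ x, IsExp (τ x)) :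
    Rw P' (T.subst τ a) (T.subst τ b) := by
  induction h with
  | root l r σ hlr hσ =>
      rw [subst_subst, subst_subst]
      exact .root l r _ hlr fun x => (hσ x).subst hτ
  | pairL _ ih => exact .pairL ih
  | pairR _ ih => exact .pairR ih
  | fC _ ih => exact .fC ih

lemma Rw.reflTransGen_subst {a b : T} (h : Relation.ReflTransGen (Rw P') a b)
    {τ : ℕ → T} (hτ : ∀ x, IsExp (τ x)) :
    Relation.ReflTransGen (Rw P') (T.subst τ a) (T.subst τ b) :=
  h.lift _ fun _ _ hs => hs.subst hτ

lemma Rw.reflTransGen_pair {a a' b b' : T} (ha : Relation.ReflTransGen (Rw P') a a')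
    (hb : Relation.ReflTransGen (Rw P') b b') :
    Relation.ReflTransGen (Rw P') (pair a b) (pair a' b') :=
  (ha.lift (pair · b) fun _ _ hs => Rw.pairL hs).trans
    (hb.lift (pair a' ·) fun _ _ hs => Rw.pairR hs)

end Rewriting

lemma CR.coin_cases {u : T} (h : CR coin u) : u = bot ∨ u = zero ∨ u = one := by
  cases h with
  | B => exact .inl rfl
  | ORcoin0 h => cases h <;> simp
  | ORcoin1 h => cases h <;> simp

lemma not_CR_f_coin_pair_zero_one : ¬ CR (f coin) (pair zero one) := by
  intro h
  obtain ⟨u, hcoin, hpair⟩ : ∃ u, CR coin u ∧ CR (pair u u) (pair zero one) := by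
    cases h with
    | ORf _ hcoin hpair => exact ⟨_, hcoin, hpair⟩
  obtain ⟨hzero, hone⟩ : CR u zero ∧ CR u one := by
    cases hpair with
    | DCpair hzero hone => exact ⟨hzero, hone⟩
  rcases hcoin.coin_cases with rfl | rfl | rfl
  · cases hzero
  · cases hone
  · cases hzero

/-- Proposition: there is no term rewriting system `P'` such that, for every
expression `e` and total constructor term `t`, `t` belongs to the
CRWL-denotation of `e` under `P = { f(X) → c(X,X), coin → 0, coin → 1 }`
iff `e →* t` in `P'`. -/
theorem no_simulating_trs :
    ¬ ∃ P' : Set (T × T),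
      (∀ p ∈ P', IsExp p.1 ∧ IsExp p.2 ∧ ∀ x, p.1 ≠ var x) ∧
      (∀ e t : T, IsExp e → IsCT t →
        (CR e t ↔ Relation.ReflTransGen (Rw P') e t)) := by
  rintro ⟨P', -, hiff⟩
  have f_var : Relation.ReflTransGen (Rw P') (f (var 0)) (pair (var 0) (var 0)) :=
    (hiff _ _ (.f (.var 0)) (.pair (.var 0) (.var 0))).1
      (.ORf (.var 0) (.RR 0) (.DCpair (.RR 0) (.RR 0)))
  have f_coin : Relation.ReflTransGen (Rw P') (f coin) (pair coin coin) :=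
    Rw.reflTransGen_subst f_var (τ := fun _ => coin) fun _ => .coin
  have coin_zero : Relation.ReflTransGen (Rw P') coin zero :=
    (hiff _ _ .coin .zero).1 (.ORcoin0 .DCzero)
  have coin_one : Relation.ReflTransGen (Rw P') coin one :=
    (hiff _ _ .coin .one).1 (.ORcoin1 .DCone)
  exact not_CR_f_coin_pair_zero_one <| (hiff _ _ (.f .coin) (.pair .zero .one)).2 <|
    f_coin.trans (Rw.reflTransGen_pair coin_zero coin_one)

end T

end Stmt0
end

section
/- The restriction of let-rewriting obtained by disallowing the (Fapp) rule is a terminating relation: there is no infinite sequence e₀ →ˡⁿᶠ e₁ →ˡⁿᶠ e₂ →ˡⁿᶠ ⋯. Consequently every let-expression has at least one normal form with respect to this relation. -/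
namespace CRWLLet

/-- Partial let-expressions over constructor symbols `C` and function symbols `F`:
`⊥`, variables, constructor applications, function applications and let-bindings. -/
inductive LExp (C F : Type) : Type where
  | bot : LExp C F
  | var : ℕ → LExp C F
  | cons : C → (n : ℕ) → (Fin n → LExp C F) → LExp C F
  | fn : F → (n : ℕ) → (Fin n → LExp C F) → LExp C F
  | lett : ℕ → LExp C F → LExp C F → LExp C F

namespace LExp

variable {C F : Type}

/-- Application of a substitution (bound variables shield their body, following
the variable convention). -/
def subst (σ : ℕ → LExp C F) : LExp C F → LExp C F
  | .bot => .bot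
  | .var x => σ x
  | .cons c n a => .cons c n (fun i => subst σ (a i))
  | .fn f n a => .fn f n (fun i => subst σ (a i))
  | .lett x e₁ e₂ => .lett x (subst σ e₁) (subst (Function.update σ x (LExp.var x)) e₂)

/-- The substitution `[x / t]`. -/
def single (x : ℕ) (t : LExp C F) : ℕ → LExp C F :=
  Function.update LExp.var x t

/-- Free variables. -/
def FV : LExp C F → Set ℕ
  | .bot => ∅
  | .var x => {x}
  | .cons _ _ a => ⋃ i, FV (a i)
  | .fn _ _ a => ⋃ i, FV (a i)
  | .lett x e₁ e₂ => FV e₁ ∪ (FV e₂ \ {x})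

/-- Partial constructor terms (`CTerm_⊥`). -/
inductive IsPCT : LExp C F → Prop
  | bot : IsPCT .bot
  | var (x : ℕ) : IsPCT (.var x)
  | cons {c : C} {n : ℕ} {a : Fin n → LExp C F} :
      (∀ i, IsPCT (a i)) → IsPCT (.cons c n a)

/-- Total constructor terms (`CTerm`). -/
inductive IsCT : LExp C F → Prop
  | var (x : ℕ) : IsCT (.var x)
  | cons {c : C} {n : ℕ} {a : Fin n → LExp C F} :
      (∀ i, IsCT (a i)) → IsCT (.cons c n a)

/-- The approximation ordering `⊑`. -/
inductive Approx : LExp C F → LExp C F → Prop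
  | bot (e : LExp C F) : Approx .bot e
  | var (x : ℕ) : Approx (.var x) (.var x)
  | cons {c : C} {n : ℕ} {a b : Fin n → LExp C F} :
      (∀ i, Approx (a i) (b i)) → Approx (.cons c n a) (.cons c n b)
  | fn {f : F} {n : ℕ} {a b : Fin n → LExp C F} :
      (∀ i, Approx (a i) (b i)) → Approx (.fn f n a) (.fn f n b)
  | lett {x : ℕ} {e₁ e₁' e₂ e₂' : LExp C F} :
      Approx e₁ e₁' → Approx e₂ e₂' → Approx (.lett x e₁ e₂) (.lett x e₁' e₂')

/-- The shell `|e|` of a let-expression. -/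
def shell : LExp C F → LExp C F
  | .bot => .bot
  | .var x => .var x
  | .cons c n a => .cons c n (fun i => shell (a i))
  | .fn _ _ _ => .bot
  | .lett x e₁ e₂ => subst (single x (shell e₁)) (shell e₂)

/-- Partial constructor substitutions (`CSubst_⊥`). -/
def PCSubst (σ : ℕ → LExp C F) : Prop := ∀ x, IsPCT (σ x)

/-- Total constructor substitutions (`CSubst`). -/
def CSubst (σ : ℕ → LExp C F) : Prop := ∀ x, IsCT (σ x)

/-- Number of occurrences of the variable `x` (used only on constructor terms,
for linearity). -/
def count (x : ℕ) : LExp C F → ℕ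
  | .bot => 0
  | .var y => if y = x then 1 else 0
  | .cons _ _ a => ∑ i, count x (a i)
  | .fn _ _ a => ∑ i, count x (a i)
  | .lett _ e₁ e₂ => count x e₁ + count x e₂

end LExp

open LExp

/-- A program rule `f(p₁,…,pₙ) → r`. -/
structure Rule (C F : Type) where
  fsym : F
  arity : ℕ
  lhs : Fin arity → LExp C F
  rhs : LExp C F

variable {C F : Type}

/-- A rule is well-formed (constructor based) when its patterns are total
constructor terms and the tuple of patterns is linear. -/
def Rule.WF (R : Rule C F) : Prop :=
  (∀ i, IsCT (R.lhs i)) ∧ ∀ x : ℕ, (∑ i, count x (R.lhs i)) ≤ 1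

/-- The variables occurring in the left-hand side of a rule. -/
def Rule.vars (R : Rule C F) : Set ℕ := ⋃ i, FV (R.lhs i)

/-- A program is a set of rules. -/
abbrev Program (C F : Type) := Set (Rule C F)

def Program.WF (P : Program C F) : Prop := ∀ R ∈ P, R.WF

/-- The CRWL_let proof calculus: rules (B), (RR), (DC), (OR) and (Let). -/
inductive CRWL (P : Program C F) : LExp C F → LExp C F → Prop
  | B (e : LExp C F) : CRWL P e .bot
  | RR (x : ℕ) : CRWL P (.var x) (.var x)
  | DC {c : C} {n : ℕ} {a t : Fin n → LExp C F} :
      (∀ i, CRWL P (a i) (t i)) → CRWL P (.cons c n a) (.cons c n t)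
  | OR (R : Rule C F) (θ : ℕ → LExp C F) {a : Fin R.arity → LExp C F} {t : LExp C F} :
      R ∈ P → PCSubst θ →
      (∀ i, CRWL P (a i) (subst θ (R.lhs i))) →
      CRWL P (subst θ R.rhs) t →
      CRWL P (.fn R.fsym R.arity a) t
  | Lett {x : ℕ} {e₁ e₂ t₁ t : LExp C F} :
      CRWL P e₁ t₁ → CRWL P (subst (single x t₁) e₂) t →
      CRWL P (.lett x e₁ e₂) t

/-- The CRWL_let denotation of an expression. -/
def den (P : Program C F) (e : LExp C F) : Set (LExp C F) :=
  {t | IsPCT t ∧ CRWL P e t}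

/-- Application of a symbol `h ∈ Σ = CS ∪ FS`. -/
def appSym : C ⊕ F → (n : ℕ) → (Fin n → LExp C F) → LExp C F
  | Sum.inl c, n, a => .cons c n a
  | Sum.inr f, n, a => .fn f n a

/-- One-hole contexts. -/
inductive Ctx (C F : Type) : Type where
  | hole : Ctx C F
  | consC : C → (n : ℕ) → (Fin n → LExp C F) → Fin n → Ctx C F → Ctx C F
  | fnC : F → (n : ℕ) → (Fin n → LExp C F) → Fin n → Ctx C F → Ctx C F
  | letC1 : ℕ → Ctx C F → LExp C F → Ctx C F
  | letC2 : ℕ → LExp C F → Ctx C F → Ctx C F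

/-- Filling the hole of a context. -/
def Ctx.fill : Ctx C F → LExp C F → LExp C F
  | .hole, e => e
  | .consC c n a i K, e => .cons c n (Function.update a i (K.fill e))
  | .fnC f n a i K, e => .fn f n (Function.update a i (K.fill e))
  | .letC1 x K b, e => .lett x (K.fill e) b
  | .letC2 x d K, e => .lett x d (K.fill e)

/-- The let-bound variables whose scope contains the hole. -/
def Ctx.BV : Ctx C F → Set ℕ
  | .hole => ∅
  | .consC _ _ _ _ K => K.BV
  | .fnC _ _ _ _ K => K.BV
  | .letC1 _ K _ => K.BV
  | .letC2 x _ K => insert x K.BV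

/-- Root steps of the Fapp-free let-rewriting rules (LetIn), (Bind), (Elim), (Flat). -/
inductive NFRoot : LExp C F → LExp C F → Prop
  | letIn (h : C ⊕ F) (n : ℕ) (a : Fin n → LExp C F) (i : Fin n) (x : ℕ) :
      ((∃ g m b, a i = LExp.fn g m b) ∨ (∃ y d b, a i = LExp.lett y d b)) →
      x ∉ FV (appSym h n a) →
      NFRoot (appSym h n a) (.lett x (a i) (appSym h n (Function.update a i (.var x))))
  | bind (x : ℕ) (t e : LExp C F) :
      IsCT t → NFRoot (.lett x t e) (subst (single x t) e)
  | elim (x : ℕ) (e₁ e₂ : LExp C F) :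
      x ∉ FV e₂ → NFRoot (.lett x e₁ e₂) e₂
  | flat (x y : ℕ) (e₁ e₂ e₃ : LExp C F) :
      y ∉ FV e₃ →
      NFRoot (.lett x (.lett y e₁ e₂) e₃) (.lett y e₁ (.lett x e₂ e₃))

/-- The Fapp-free let-rewriting relation `→ˡⁿᶠ`. -/
inductive NFStep : LExp C F → LExp C F → Prop
  | mk (K : Ctx C F) {e e' : LExp C F} : NFRoot e e' → NFStep (K.fill e) (K.fill e')

/-- The let-rewriting relation `→ˡ` (rules Fapp, LetIn, Bind, Elim, Flat, in
arbitrary contexts, with the variable-capture side condition for Fapp steps). -/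
inductive LStep (P : Program C F) : LExp C F → LExp C F → Prop
  | nf (K : Ctx C F) {e e' : LExp C F} : NFRoot e e' → LStep P (K.fill e) (K.fill e')
  | fapp (K : Ctx C F) (R : Rule C F) (θ : ℕ → LExp C F) :
      R ∈ P → CSubst θ →
      (∀ z, (∃ y, y ∉ R.vars ∧ θ y ≠ LExp.var y ∧ z ∈ FV (θ y)) → z ∉ K.BV) →
      LStep P (K.fill (.fn R.fsym R.arity (fun i => subst θ (R.lhs i))))
              (K.fill (subst θ R.rhs))



/-! ### Termination measure for `NFStep` -/

namespace LExp

/-- Number of `fn` and `lett` nodes. -/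
def nFL : LExp C F → ℕ
  | .bot => 0
  | .var _ => 0
  | .cons _ _ a => ∑ i, nFL (a i)
  | .fn _ _ a => 1 + ∑ i, nFL (a i)
  | .lett _ e₁ e₂ => 1 + nFL e₁ + nFL e₂

/-- Indicator of containing a `fn` or `lett` node. -/
def ind (e : LExp C F) : ℕ := min (nFL e) 1

/-- Number of `lett` nodes. -/
def nlets : LExp C F → ℕ
  | .bot => 0
  | .var _ => 0
  | .cons _ _ a => ∑ i, nlets (a i)
  | .fn _ _ a => ∑ i, nlets (a i)
  | .lett _ e₁ e₂ => 1 + nlets e₁ + nlets e₂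

/-- Size. -/
def sz : LExp C F → ℕ
  | .bot => 1
  | .var _ => 1
  | .cons _ _ a => 1 + ∑ i, sz (a i)
  | .fn _ _ a => 1 + ∑ i, sz (a i)
  | .lett _ e₁ e₂ => 1 + sz e₁ + sz e₂

/-- Number of application-argument positions whose subterm contains a `fn` or `lett`. -/
def Aw : LExp C F → ℕ
  | .bot => 0
  | .var _ => 0
  | .cons _ _ a => ∑ i, (Aw (a i) + ind (a i))
  | .fn _ _ a => ∑ i, (Aw (a i) + ind (a i))
  | .lett _ e₁ e₂ => Aw e₁ + Aw e₂

/-- Sum over `lett` nodes of the size of the bound expression. -/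
def Sw : LExp C F → ℕ
  | .bot => 0
  | .var _ => 0
  | .cons _ _ a => ∑ i, Sw (a i)
  | .fn _ _ a => ∑ i, Sw (a i)
  | .lett _ e₁ e₂ => sz e₁ + Sw e₁ + Sw e₂

lemma Aw_eq_zero : ∀ {e : LExp C F}, nFL e = 0 → Aw e = 0 := by
  intro e
  induction e with
  | bot => intro _; rfl
  | var x => intro _; rfl
  | cons c n a ih =>
      intro h
      simp only [nFL, Finset.sum_eq_zero_iff, Finset.mem_univ, true_implies] at h
      simp only [Aw]
      refine Finset.sum_eq_zero fun i _ => ?_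
      simp only [ih i (h i), ind, h i]
      omega
  | fn f n a ih => intro h; simp only [nFL] at h; omega
  | lett x e₁ e₂ ih₁ ih₂ => intro h; simp only [nFL] at h; omega

lemma isCT_meas {t : LExp C F} (h : IsCT t) : nFL t = 0 ∧ nlets t = 0 := by
  induction h with
  | var x => exact ⟨rfl, rfl⟩
  | cons h ih =>
      constructor
      · simp only [nFL]
        exact Finset.sum_eq_zero fun i _ => (ih i).1
      · simp only [nlets]
        exact Finset.sum_eq_zero fun i _ => (ih i).2

lemma subst_meas : ∀ (e : LExp C F) (σ : ℕ → LExp C F),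
    (∀ x, nFL (σ x) = 0 ∧ nlets (σ x) = 0) →
    nFL (subst σ e) = nFL e ∧ nlets (subst σ e) = nlets e ∧ Aw (subst σ e) = Aw e := by
  intro e
  induction e with
  | bot => intro σ h; exact ⟨rfl, rfl, rfl⟩
  | var x => intro σ h; exact ⟨(h x).1, (h x).2, Aw_eq_zero (h x).1⟩
  | cons c n a ih =>
      intro σ h
      refine ⟨?_, ?_, ?_⟩ <;> simp only [subst, nFL, nlets, Aw]
      · exact Finset.sum_congr rfl fun i _ => (ih i σ h).1
      · exact Finset.sum_congr rfl fun i _ => (ih i σ h).2.1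
      · refine Finset.sum_congr rfl fun i _ => ?_
        rw [(ih i σ h).2.2, ind, (ih i σ h).1, ind]
  | fn f n a ih =>
      intro σ h
      refine ⟨?_, ?_, ?_⟩ <;> simp only [subst, nFL, nlets, Aw]
      · rw [Finset.sum_congr rfl fun i _ => (ih i σ h).1]
      · exact Finset.sum_congr rfl fun i _ => (ih i σ h).2.1
      · refine Finset.sum_congr rfl fun i _ => ?_
        rw [(ih i σ h).2.2, ind, (ih i σ h).1, ind]
  | lett x e₁ e₂ ih₁ ih₂ =>
      intro σ h
      have h' : ∀ y, nFL (Function.update σ x (LExp.var x) y) = 0 ∧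
          nlets (Function.update σ x (LExp.var x) y) = 0 := by
        intro y
        rcases eq_or_ne y x with rfl | hy
        · simp [nFL, nlets]
        · simpa [Function.update_apply, hy] using h y
      obtain ⟨a1, a2, a3⟩ := ih₁ σ h
      obtain ⟨b1, b2, b3⟩ := ih₂ _ h'
      refine ⟨?_, ?_, ?_⟩ <;> simp only [subst, nFL, nlets, Aw] <;> omega

lemma sum_update_split {n : ℕ} (g : LExp C F → ℕ) (a : Fin n → LExp C F) (i : Fin n)
    (v : LExp C F) :
    ∑ j, g (Function.update a i v j) = g v + ∑ j ∈ Finset.univ \ {i}, g (a j) := by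
  have h : ∀ j, g (Function.update a i v j) = Function.update (fun k => g (a k)) i (g v) j := by
    intro j
    rcases eq_or_ne j i with rfl | h
    · simp
    · simp [Function.update_apply, h]
  calc ∑ j, g (Function.update a i v j)
      = ∑ j, Function.update (fun k => g (a k)) i (g v) j :=
        Finset.sum_congr rfl fun j _ => h j
    _ = g v + ∑ j ∈ Finset.univ \ {i}, g (a j) :=
        Finset.sum_update_of_mem (Finset.mem_univ i) (fun k => g (a k)) (g v)

lemma sum_split {n : ℕ} (g : LExp C F → ℕ) (a : Fin n → LExp C F) (i : Fin n) :
    ∑ j, g (a j) = g (a i) + ∑ j ∈ Finset.univ \ {i}, g (a j) := by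
  have h := sum_update_split g a i (a i)
  rwa [Function.update_eq_self] at h

end LExp

open LExp in
/-- The decrease invariant for a single `NFStep`. -/
def Inv (e e' : LExp C F) : Prop :=
  ind e' ≤ ind e ∧ Aw e' ≤ Aw e ∧
  (Aw e' < Aw e ∨
    (Aw e' = Aw e ∧
      ((ind e' < ind e ∧ nlets e' < nlets e) ∨
        (ind e' = ind e ∧
          (nlets e' < nlets e ∨
            (nlets e' = nlets e ∧ Sw e' < Sw e ∧ sz e' = sz e))))))

lemma frame_cons (c : C) (n : ℕ) (a : Fin n → LExp C F) (i : Fin n) {u u' : LExp C F}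
    (h : Inv u u') :
    Inv (.cons c n (Function.update a i u)) (.cons c n (Function.update a i u')) := by
  have eA : ∀ v : LExp C F, Aw (LExp.cons c n (Function.update a i v)) =
      (Aw v + ind v) + ∑ j ∈ Finset.univ \ {i}, (Aw (a j) + ind (a j)) := by
    intro v
    simpa only [Aw] using sum_update_split (fun e => Aw e + ind e) a i v
  have eN : ∀ v : LExp C F, nFL (LExp.cons c n (Function.update a i v)) =
      nFL v + ∑ j ∈ Finset.univ \ {i}, nFL (a j) := by
    intro v
    simpa only [nFL] using sum_update_split nFL a i v
  have eL : ∀ v : LExp C F, nlets (LExp.cons c n (Function.update a i v)) =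
      nlets v + ∑ j ∈ Finset.univ \ {i}, nlets (a j) := by
    intro v
    simpa only [nlets] using sum_update_split nlets a i v
  have eS : ∀ v : LExp C F, Sw (LExp.cons c n (Function.update a i v)) =
      Sw v + ∑ j ∈ Finset.univ \ {i}, Sw (a j) := by
    intro v
    simpa only [Sw] using sum_update_split Sw a i v
  have eZ : ∀ v : LExp C F, sz (LExp.cons c n (Function.update a i v)) =
      1 + (sz v + ∑ j ∈ Finset.univ \ {i}, sz (a j)) := by
    intro v
    have h0 := sum_update_split sz a i v
    simp only [sz]
    omega
  simp only [Inv, ind] at h ⊢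
  rw [eA u, eA u', eN u, eN u', eL u, eL u', eS u, eS u', eZ u, eZ u']
  simp only [ind]
  omega

lemma frame_fn (f : F) (n : ℕ) (a : Fin n → LExp C F) (i : Fin n) {u u' : LExp C F}
    (h : Inv u u') :
    Inv (.fn f n (Function.update a i u)) (.fn f n (Function.update a i u')) := by
  have eA : ∀ v : LExp C F, Aw (LExp.fn f n (Function.update a i v)) =
      (Aw v + ind v) + ∑ j ∈ Finset.univ \ {i}, (Aw (a j) + ind (a j)) := by
    intro v
    simpa only [Aw] using sum_update_split (fun e => Aw e + ind e) a i v
  have eN : ∀ v : LExp C F, nFL (LExp.fn f n (Function.update a i v)) =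
      1 + (nFL v + ∑ j ∈ Finset.univ \ {i}, nFL (a j)) := by
    intro v
    have h0 := sum_update_split nFL a i v
    simp only [nFL]
    omega
  have eL : ∀ v : LExp C F, nlets (LExp.fn f n (Function.update a i v)) =
      nlets v + ∑ j ∈ Finset.univ \ {i}, nlets (a j) := by
    intro v
    simpa only [nlets] using sum_update_split nlets a i v
  have eS : ∀ v : LExp C F, Sw (LExp.fn f n (Function.update a i v)) =
      Sw v + ∑ j ∈ Finset.univ \ {i}, Sw (a j) := by
    intro v
    simpa only [Sw] using sum_update_split Sw a i v
  have eZ : ∀ v : LExp C F, sz (LExp.fn f n (Function.update a i v)) =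
      1 + (sz v + ∑ j ∈ Finset.univ \ {i}, sz (a j)) := by
    intro v
    have h0 := sum_update_split sz a i v
    simp only [sz]
    omega
  simp only [Inv, ind] at h ⊢
  rw [eA u, eA u', eN u, eN u', eL u, eL u', eS u, eS u', eZ u, eZ u']
  simp only [ind]
  omega

lemma frame_let1 (x : ℕ) (b : LExp C F) {u u' : LExp C F} (h : Inv u u') :
    Inv (.lett x u b) (.lett x u' b) := by
  simp only [Inv, ind, Aw, nFL, nlets, Sw, sz] at h ⊢
  omega

lemma frame_let2 (x : ℕ) (d : LExp C F) {u u' : LExp C F} (h : Inv u u') :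
    Inv (.lett x d u) (.lett x d u') := by
  simp only [Inv, ind, Aw, nFL, nlets, Sw, sz] at h ⊢
  omega

lemma fill_inv : ∀ (K : Ctx C F) {e e' : LExp C F}, Inv e e' → Inv (K.fill e) (K.fill e')
  | .hole, _, _, h => h
  | .consC c n a i K, _, _, h => frame_cons c n a i (fill_inv K h)
  | .fnC f n a i K, _, _, h => frame_fn f n a i (fill_inv K h)
  | .letC1 x K b, _, _, h => frame_let1 x b (fill_inv K h)
  | .letC2 x d K, _, _, h => frame_let2 x d (fill_inv K h)

lemma root_inv {e e' : LExp C F} (h : NFRoot e e') : Inv e e' := by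
  cases h with
  | letIn hs n a i x hfl hx =>
      have hind : 1 ≤ nFL (a i) := by
        rcases hfl with ⟨g, m, b, hab⟩ | ⟨y, d, b, hab⟩ <;> rw [hab] <;>
          simp only [nFL] <;> omega
      have hA := sum_split (fun e => Aw e + ind e) a i
      have hA2 := sum_update_split (fun e => Aw e + ind e) a i (LExp.var x)
      have hN := sum_split nFL a i
      have hN2 := sum_update_split nFL a i (LExp.var x)
      cases hs with
      | inl c =>
          simp only [appSym, Inv, Aw, nFL, ind] at hA hA2 hN hN2 ⊢
          omega
      | inr f =>
          simp only [appSym, Inv, Aw, nFL, ind] at hA hA2 hN hN2 ⊢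
          omega
  | bind x t e₂ hct =>
      obtain ⟨h1, h2⟩ := isCT_meas hct
      have hs : ∀ y, nFL (single x t y) = 0 ∧ nlets (single x t y) = 0 := by
        intro y
        rcases eq_or_ne y x with rfl | hy
        · simpa [single] using ⟨h1, h2⟩
        · simp [single, Function.update_apply, hy, nFL, nlets]
      obtain ⟨s1, s2, s3⟩ := subst_meas e₂ _ hs
      have hA0 : Aw t = 0 := Aw_eq_zero h1
      simp only [Inv, Aw, nFL, nlets, ind, Sw, sz]
      omega
  | elim x e₁ e₂ hx =>
      simp only [Inv, Aw, nFL, nlets, ind, Sw, sz]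
      omega
  | flat x y e₁ e₂ e₃ hy =>
      simp only [Inv, Aw, nFL, nlets, ind, Sw, sz]
      omega

/-- The lexicographic termination measure. -/
def meas (e : LExp C F) : ℕ × ℕ × ℕ := (Aw e, nlets e, Sw e)

def lt3 : ℕ × ℕ × ℕ → ℕ × ℕ × ℕ → Prop :=
  Prod.Lex (· < ·) (Prod.Lex (· < ·) (· < ·))

lemma lt3_wf : WellFounded (lt3 : ℕ × ℕ × ℕ → ℕ × ℕ × ℕ → Prop) :=
  WellFounded.prod_lex wellFounded_lt (WellFounded.prod_lex wellFounded_lt wellFounded_lt)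

lemma step_dec {e e' : LExp C F} (h : NFStep e e') : lt3 (meas e') (meas e) := by
  cases h with
  | @mk K e₀ e₀' hr =>
    obtain ⟨hind, hle, hcase⟩ := fill_inv K (root_inv hr)
    rcases hcase with hlt | ⟨hA, hcase⟩
    · exact Prod.Lex.left _ _ hlt
    · simp only [meas, hA]
      refine Prod.Lex.right _ ?_
      rcases hcase with ⟨_, h2⟩ | ⟨_, h2 | ⟨h2, h3, _⟩⟩
      · exact Prod.Lex.left _ _ h2
      · exact Prod.Lex.left _ _ h2
      · rw [h2]
        exact Prod.Lex.right _ h3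

lemma nfstep_flip_wf : WellFounded (fun a b : LExp C F => NFStep b a) :=
  Subrelation.wf (fun h => step_dec h) (InvImage.wf meas lt3_wf)


/-- Termination of the Fapp-free let-rewriting relation `→ˡⁿᶠ`:
no infinite reduction sequence exists, and consequently every let-expression
has at least one `→ˡⁿᶠ`-normal form. -/
theorem nfstep_terminating (C F : Type) :
    (¬ ∃ f : ℕ → LExp C F, ∀ n, NFStep (f n) (f (n + 1))) ∧
    (∀ e : LExp C F, ∃ e', Relation.ReflTransGen NFStep e e' ∧
      ∀ e'', ¬ NFStep e' e'') := by
  constructor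
  · rintro ⟨f, hf⟩
    have key : ∀ a : LExp C F, ∀ f : ℕ → LExp C F, f 0 = a →
        ¬ (∀ n, NFStep (f n) (f (n + 1))) := by
      intro a
      induction a using nfstep_flip_wf.induction with
      | _ a ih =>
          intro f h0 hstep
          exact ih (f 1) (h0 ▸ hstep 0) (fun n => f (n + 1)) rfl (fun n => hstep (n + 1))
    exact key (f 0) f rfl hf
  · intro e
    induction e using nfstep_flip_wf.induction with
    | _ e ih =>
        by_cases h : ∃ e'', NFStep e e''
        · obtain ⟨e₁, h1⟩ := h
          obtain ⟨e', hr, hn⟩ := ih e₁ h1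
          exact ⟨e', Relation.ReflTransGen.head h1 hr, hn⟩
        · exact ⟨e, Relation.ReflTransGen.refl, fun e'' he => h ⟨e'', he⟩⟩

end CRWLLet
end

section
/- Polarity of CRWL_let: for partial let-expressions e ⊑ e' and partial constructor terms t' ⊑ t, if e ⇒ t is derivable in CRWL_let then e' ⇒ t' is derivable with a proof of the same size or smaller (size = number of calculus rules applied). -/
namespace CRWLLet

open LExp

variable {C F : Type}

/-- CRWL_let derivability, indexed by the size of the proof (number of rules
of the calculus applied). -/
inductive CRWLN (P : Program C F) : ℕ → LExp C F → LExp C F → Prop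
  | B (e : LExp C F) : CRWLN P 1 e .bot
  | RR (x : ℕ) : CRWLN P 1 (.var x) (.var x)
  | DC {c : C} {n : ℕ} {a t : Fin n → LExp C F} {k : Fin n → ℕ} :
      (∀ i, CRWLN P (k i) (a i) (t i)) →
      CRWLN P ((∑ i, k i) + 1) (.cons c n a) (.cons c n t)
  | OR (R : Rule C F) (θ : ℕ → LExp C F) {a : Fin R.arity → LExp C F}
      {t : LExp C F} {k : Fin R.arity → ℕ} {m : ℕ} :
      R ∈ P → PCSubst θ →
      (∀ i, CRWLN P (k i) (a i) (subst θ (R.lhs i))) →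
      CRWLN P m (subst θ R.rhs) t →
      CRWLN P ((∑ i, k i) + m + 1) (.fn R.fsym R.arity a) t
  | Lett {x : ℕ} {e₁ e₂ t₁ t : LExp C F} {k m : ℕ} :
      CRWLN P k e₁ t₁ → CRWLN P m (subst (single x t₁) e₂) t →
      CRWLN P (k + m + 1) (.lett x e₁ e₂) t

namespace LExp

theorem Approx.refl (e : LExp C F) : Approx e e := by
  induction e with
  | bot => exact .bot _
  | var x => exact .var x
  | cons _ _ _ ih => exact .cons ih
  | fn _ _ _ ih => exact .fn ih
  | lett _ _ _ ih₁ ih₂ => exact .lett ih₁ ih₂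

theorem Approx.subst {e e' : LExp C F} (σ : ℕ → LExp C F) (h : Approx e e') :
    Approx (subst σ e) (subst σ e') := by
  induction h generalizing σ with
  | bot => exact .bot _
  | var x => exact .refl _
  | cons _ ih => exact .cons fun i => ih i σ
  | fn _ ih => exact .fn fun i => ih i σ
  | lett _ _ ih₁ ih₂ => exact .lett (ih₁ σ) (ih₂ _)

end LExp

theorem exists_sum_le_of_forall_exists_le {ι M : Type*} [Fintype ι] [AddCommMonoid M]
    [PartialOrder M] [IsOrderedAddMonoid M] {k : ι → M} {Q : ι → M → Prop}
    (h : ∀ i, ∃ k' ≤ k i, Q i k') :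
    ∃ k' : ι → M, ∑ i, k' i ≤ ∑ i, k i ∧ ∀ i, Q i (k' i) := by
  choose k' hk' hQ using h
  exact ⟨k', Finset.sum_le_sum fun i _ => hk' i, hQ⟩

theorem polarity_general (P : Program C F)
    (e e' t t' : LExp C F) (k : ℕ)
    (hee : Approx e e') (htt : Approx t' t) (h : CRWLN P k e t) :
    ∃ k' ≤ k, CRWLN P k' e' t' := by
  induction h generalizing e' t' with
  | B e =>
    cases htt
    exact ⟨1, le_rfl, .B e'⟩
  | RR x =>
    cases hee
    cases htt with
    | bot => exact ⟨1, le_rfl, .B _⟩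
    | var => exact ⟨1, le_rfl, .RR x⟩
  | DC _ ih =>
    cases hee with
    | cons ha =>
      cases htt with
      | bot => exact ⟨1, Nat.le_add_left 1 _, .B _⟩
      | cons ht =>
        obtain ⟨k', hk', hargs⟩ :=
          exists_sum_le_of_forall_exists_le fun i => ih i _ _ (ha i) (ht i)
        exact ⟨(∑ i, k' i) + 1, by omega, .DC hargs⟩
  -- The intermediate values `θ pᵢ` and `t₁` are reused unchanged; only the expressions grow.
  | OR R θ hR hθ _ _ ihargs ihrhs =>
    cases hee with
    | fn ha =>
      obtain ⟨k', hk', hargs⟩ :=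
        exists_sum_le_of_forall_exists_le fun i => ihargs i _ _ (ha i) (.refl _)
      obtain ⟨m', hm', hrhs⟩ := ihrhs _ _ (.refl _) htt
      exact ⟨(∑ i, k' i) + m' + 1, by omega, .OR R θ hR hθ hargs hrhs⟩
  | Lett _ _ ih₁ ih₂ =>
    cases hee with
    | lett ha₁ ha₂ =>
      obtain ⟨k₁, hk₁, h₁⟩ := ih₁ _ _ ha₁ (.refl _)
      obtain ⟨m, hm, h₂⟩ := ih₂ _ _ (ha₂.subst _) htt
      exact ⟨k₁ + m + 1, by omega, .Lett h₁ h₂⟩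

/-- Polarity of CRWL_let: from a bigger expression one can derive a smaller
value, with a proof of the same size or smaller. -/
theorem polarity (P : Program C F) (hP : P.WF)
    (e e' t t' : LExp C F) (k : ℕ)
    (hee : Approx e e') (htt : Approx t' t) (h : CRWLN P k e t) :
    ∃ k' ≤ k, CRWLN P k' e' t' :=
  polarity_general P e e' t t' k hee htt h

end CRWLLet
end
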